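/- Let k : ℝⁿ × ℝⁿ → ℝ be a measurable kernel for which there exist C, δ > 0 such that |k(x,y) − k(x',y)| ≤ C·|x − x'|^δ / |x − y|^{n+δ} whenever x, x' ∈ Q and y ∈ (2Q)^c for some cube Q. Let T be a linear operator on integrable functions such that: (1) T is of weak type (1,1); and (2) whenever g is integrable and x lies outside the support of g, Tg(x) = ∫ k(x,y) g(y) dy. Then for every 0 < s ≤ 1/2 there is a constant c (depending on n, δ, s and the constants of T) such that for every integrable f and every x ∈ ℝⁿ, M♯_{0,s}(Tf)(x) ≤ c · Mf(x). -/

import Mathlib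

open MeasureTheory ENNReal

namespace LocalMedian

/-- Euclidean space `ℝⁿ`. -/
abbrev Sp (n : ℕ) := EuclideanSpace ℝ (Fin n)

/-- An axis-parallel cube in `ℝⁿ`, given by its lower corner and (positive) sidelength. -/
structure Cube (n : ℕ) where
  corner : Sp n
  side : ℝ
  side_pos : 0 < side

namespace Cube

variable {n : ℕ}

/-- The set of points of the cube. -/
def set (Q : Cube n) : Set (Sp n) :=
  {x | ∀ i, Q.corner i ≤ x i ∧ x i ≤ Q.corner i + Q.side}

/-- The center of the cube. -/
noncomputable def center (Q : Cube n) : Sp n := WithLp.toLp 2 (fun i => Q.corner i + Q.side / 2)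

/-- The cube concentric with `Q` whose sidelength is `r` times that of `Q`. -/
noncomputable def dilate (Q : Cube n) (r : ℝ) (hr : 0 < r) : Cube n where
  corner := WithLp.toLp 2 (fun i => Q.center i - r * Q.side / 2)
  side := r * Q.side
  side_pos := mul_pos hr Q.side_pos

/-- `Q` is a dyadic subcube of `Q₀`, i.e. obtained from `Q₀` by repeated dyadic
subdivision into `2ⁿ` congruent subcubes. -/
def dyadicSub (Q₀ Q : Cube n) : Prop :=
  ∃ (k : ℕ) (m : Fin n → ℕ), (∀ i, m i < 2 ^ k) ∧
    Q.side = Q₀.side / 2 ^ k ∧ ∀ i, Q.corner i = Q₀.corner i + Q.side * m i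

/-- `Q` is one of the `2ⁿ` dyadic children of `P` (so `P` is the dyadic parent of `Q`). -/
def isDyadicChild (Q P : Cube n) : Prop :=
  Q.side = P.side / 2 ∧ ∃ m : Fin n → ℕ, (∀ i, m i < 2) ∧
    ∀ i, Q.corner i = P.corner i + Q.side * m i

end Cube

variable {n : ℕ}

/-- The (maximal) median of `f` over the cube `Q` with parameter `t`:
`m_f(t,Q) = sup { M : |{y ∈ Q : f y < M}| ≤ t|Q| }`. -/
noncomputable def median (f : Sp n → ℝ) (t : ℝ) (Q : Cube n) : ℝ :=
  sSup {M : ℝ | volume {y ∈ Q.set | f y < M} ≤ ENNReal.ofReal t * volume Q.set}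

/-- The local oscillation `inf_c inf {α ≥ 0 : |{y ∈ Q : |f y - c| > α}| < s|Q|}`. -/
noncomputable def osc (f : Sp n → ℝ) (s : ℝ) (Q : Cube n) : ℝ :=
  ⨅ c : ℝ, sInf {α : ℝ | 0 ≤ α ∧
    volume {y ∈ Q.set | α < |f y - c|} < ENNReal.ofReal s * volume Q.set}

/-- The local sharp maximal function `M♯_{0,s,Q₀} f`, restricted to the cube `Q₀`. -/
noncomputable def sharpLoc (f : Sp n → ℝ) (s : ℝ) (Q₀ : Cube n) (x : Sp n) : ℝ≥0∞ :=
  ⨆ Q : {Q : Cube n // x ∈ Q.set ∧ Q.set ⊆ Q₀.set}, ENNReal.ofReal (osc f s Q.1)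

/-- The local sharp maximal function `M♯_{0,s} f` (over all cubes containing `x`). -/
noncomputable def sharp (f : Sp n → ℝ) (s : ℝ) (x : Sp n) : ℝ≥0∞ :=
  ⨆ Q : {Q : Cube n // x ∈ Q.set}, ENNReal.ofReal (osc f s Q.1)

/-- The Hardy–Littlewood maximal function (over cubes containing `x`). -/
noncomputable def maximal (f : Sp n → ℝ) (x : Sp n) : ℝ≥0∞ :=
  ⨆ Q : {Q : Cube n // x ∈ Q.set},
    (∫⁻ y in Q.1.set, ENNReal.ofReal |f y|) / volume Q.1.set

/-- The Hardy–Littlewood maximal function of an `ℝ≥0∞`-valued function. -/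
noncomputable def maximalE (g : Sp n → ℝ≥0∞) (x : Sp n) : ℝ≥0∞ :=
  ⨆ Q : {Q : Cube n // x ∈ Q.set}, (∫⁻ y in Q.1.set, g y) / volume Q.1.set

/-- The average `(1/|Q|) ∫_Q g`. -/
noncomputable def cubeAvg (g : Sp n → ℝ) (Q : Cube n) : ℝ :=
  (volume Q.set).toReal⁻¹ * ∫ y in Q.set, g y

/-- The Fefferman–Stein sharp maximal function
`M♯ g(x) = sup_{Q ∋ x} (1/|Q|) ∫_Q |g - g_Q|`. -/
noncomputable def fsSharp (g : Sp n → ℝ) (x : Sp n) : ℝ≥0∞ :=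
  ⨆ Q : {Q : Cube n // x ∈ Q.set},
    ENNReal.ofReal (cubeAvg (fun y => |g y - cubeAvg g Q.1|) Q.1)

/-!
Fix a cube `Q ∋ x`, let `m` bound `Mf(x)`, and split `f = f₁ + f₂` with `f₁ = f · 1_{2Q}`.
The weak (1,1) bound, together with `‖f₁‖₁ ≤ m |2Q|`, shows that `|T f₁| ≤ 2ⁿ⁺¹ C_T m / s` on `Q`
outside a set of measure `< s |Q|`. On `Q` the function `T f₂` is given by the kernel, and
Hörmander's condition summed over the dyadic annuli `2ʲ⁺²Q \ 2ʲ⁺¹Q` (each contributing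
`O(2^{-jδ} m)`) shows that `T f₂` stays within `A m` of its value at a corner of `Q`.
That value is the constant `c` in the definition of the oscillation.
-/

lemma EuclideanSpace.norm_le_sqrt_card_mul_of_forall_abs_le {ι : Type*} [Fintype ι]
    {z : EuclideanSpace ℝ ι} {b : ℝ} (hb : 0 ≤ b) (h : ∀ i, |z i| ≤ b) :
    ‖z‖ ≤ √(Fintype.card ι) * b := by
  rw [EuclideanSpace.norm_eq, ← Real.sqrt_sq hb, ← Real.sqrt_mul (Nat.cast_nonneg _)]
  gcongr
  calc ∑ i, ‖z i‖ ^ 2 ≤ ∑ _i : ι, b ^ 2 :=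
        Finset.sum_le_sum fun i _ => pow_le_pow_left₀ (norm_nonneg _) (h i) 2
    _ = Fintype.card ι * b ^ 2 := by simp

namespace Cube

lemma mem_set_iff {Q : Cube n} {z : Sp n} :
    z ∈ Q.set ↔ ∀ i, |z i - Q.center i| ≤ Q.side / 2 := by
  simp only [set, center, Set.mem_ofPred_eq, abs_le, PiLp.toLp_apply]
  exact forall_congr' fun i => by constructor <;> intro h <;> constructor <;> linarith [h.1, h.2]

lemma mem_dilate_iff {Q : Cube n} {r : ℝ} (hr : 0 < r) {z : Sp n} :
    z ∈ (Q.dilate r hr).set ↔ ∀ i, |z i - Q.center i| ≤ r * Q.side / 2 := by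
  simp only [set, dilate, Set.mem_ofPred_eq, abs_le]
  exact forall_congr' fun i => by constructor <;> intro h <;> constructor <;> linarith [h.1, h.2]

lemma measurableSet_set (Q : Cube n) : MeasurableSet Q.set := by
  have : Q.set = ⋂ i, (fun z : Sp n => z i) ⁻¹' Set.Icc (Q.corner i) (Q.corner i + Q.side) := by
    ext z; simp [set]
  rw [this]
  exact MeasurableSet.iInter fun i =>
    (EuclideanSpace.proj (𝕜 := ℝ) i).continuous.measurable measurableSet_Icc

lemma volume_set (Q : Cube n) : volume Q.set = ENNReal.ofReal (Q.side ^ n) := by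
  have : Q.set = (MeasurableEquiv.toLp 2 (Fin n → ℝ)).symm ⁻¹'
      (Set.univ.pi fun i => Set.Icc (Q.corner i) (Q.corner i + Q.side)) := by
    ext z; simp [set, MeasurableEquiv.toLp, Pi.le_def]
    exact forall_and
  rw [this, (EuclideanSpace.volume_preserving_symm_measurableEquiv_toLp (Fin n)).measure_preimage
    (by measurability), volume_pi_pi]
  simp [Real.volume_Icc, ← ENNReal.ofReal_pow Q.side_pos.le]

lemma dilate_set_mono (Q : Cube n) {r r' : ℝ} (hr : 0 < r) (hr' : 0 < r') (h : r ≤ r') :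
    (Q.dilate r hr).set ⊆ (Q.dilate r' hr').set := fun z hz => by
  rw [mem_dilate_iff] at hz ⊢
  exact fun i => (hz i).trans (by gcongr; exact Q.side_pos.le)

lemma set_subset_dilate (Q : Cube n) {r : ℝ} (hr : 0 < r) (hr1 : 1 ≤ r) :
    Q.set ⊆ (Q.dilate r hr).set := fun z hz => by
  rw [mem_set_iff] at hz
  rw [mem_dilate_iff]
  exact fun i => (hz i).trans (by nlinarith [Q.side_pos])

lemma set_subset_interior_dilate (Q : Cube n) {r : ℝ} (hr : 0 < r) (hr1 : 1 < r) :
    Q.set ⊆ interior (Q.dilate r hr).set := by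
  set B : Set (Sp n) := ⋂ i, (fun z : Sp n => |z i - Q.center i|) ⁻¹' Set.Iio (r * Q.side / 2)
  have hB_open : IsOpen B := isOpen_iInter_of_finite fun i =>
    isOpen_Iio.preimage (((EuclideanSpace.proj (𝕜 := ℝ) i).continuous.sub continuous_const).abs)
  have hB_sub : B ⊆ (Q.dilate r hr).set := fun z hz =>
    (mem_dilate_iff hr).2 fun i => (Set.mem_iInter.1 hz i).le
  refine fun z hz => interior_maximal hB_sub hB_open (Set.mem_iInter.2 fun i => ?_)
  exact (mem_set_iff.1 hz i).trans_lt (by nlinarith [Q.side_pos])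

noncomputable def dyadicDilate (Q : Cube n) (j : ℕ) : Cube n := Q.dilate (2 ^ j) (by positivity)

lemma monotone_dyadicDilate (Q : Cube n) : Monotone fun j => (Q.dyadicDilate j).set :=
  fun _ _ h => Q.dilate_set_mono _ _ (pow_le_pow_right₀ one_le_two h)

lemma iUnion_dyadicDilate (Q : Cube n) : ⋃ j, (Q.dyadicDilate j).set = Set.univ := by
  refine Set.eq_univ_of_forall fun z => ?_
  obtain ⟨j, hj⟩ := pow_unbounded_of_one_lt (2 * ‖z - Q.center‖ / Q.side) one_lt_two
  refine Set.mem_iUnion.2 ⟨j, (mem_dilate_iff _).2 fun i => ?_⟩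
  rw [div_lt_iff₀ Q.side_pos] at hj
  have := PiLp.norm_apply_le (z - Q.center) i
  rw [Real.norm_eq_abs] at this
  simp only [PiLp.sub_apply] at this
  linarith

lemma compl_dilate_two_subset (Q : Cube n) :
    (Q.dilate 2 two_pos).setᶜ ⊆
      ⋃ j, (Q.dyadicDilate (j + 2)).set \ (Q.dyadicDilate (j + 1)).set := by
  intro z hz
  have hmono : Monotone fun j => (Q.dyadicDilate (j + 1)).set :=
    Q.monotone_dyadicDilate.comp fun _ _ h => Nat.succ_le_succ h
  obtain ⟨j, hj⟩ := Set.mem_iUnion.1 (Q.iUnion_dyadicDilate.symm ▸ Set.mem_univ z)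
  have hz' : z ∈ ⋃ j, (Q.dyadicDilate (j + 1)).set :=
    Set.mem_iUnion.2 ⟨j, Q.monotone_dyadicDilate j.le_succ hj⟩
  rw [← iUnion_disjointed (f := fun j => (Q.dyadicDilate (j + 1)).set), Set.mem_iUnion] at hz'
  obtain ⟨_ | j, hj⟩ := hz'
  · rw [disjointed_zero] at hj
    exact absurd hj (by simpa [dyadicDilate] using hz)
  · rw [hmono.disjointed_add_one] at hj
    exact Set.mem_iUnion.2 ⟨j, hj⟩

lemma corner_mem_set (Q : Cube n) : Q.corner ∈ Q.set :=
  fun _ => ⟨le_rfl, le_add_of_nonneg_right Q.side_pos.le⟩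

lemma norm_sub_le_of_mem_set {Q : Cube n} {y y' : Sp n} (hy : y ∈ Q.set) (hy' : y' ∈ Q.set) :
    ‖y - y'‖ ≤ √n * Q.side := by
  refine (EuclideanSpace.norm_le_sqrt_card_mul_of_forall_abs_le Q.side_pos.le fun i => ?_).trans_eq
    (by rw [Fintype.card_fin])
  have := mem_set_iff.1 hy i
  have := mem_set_iff.1 hy' i
  rw [PiLp.sub_apply, abs_le] at *
  constructor <;> linarith

lemma le_norm_sub_of_notMem_dyadicDilate {Q : Cube n} {y z : Sp n} {j : ℕ} (hy : y ∈ Q.set)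
    (hz : z ∉ (Q.dyadicDilate (j + 1)).set) : 2 ^ j * Q.side / 2 ≤ ‖y - z‖ := by
  simp only [dyadicDilate, mem_dilate_iff, not_forall, not_le] at hz
  obtain ⟨i, hi⟩ := hz
  have hyi := mem_set_iff.1 hy i
  have hyz := PiLp.norm_apply_le (y - z) i
  rw [Real.norm_eq_abs, PiLp.sub_apply, abs_sub_comm] at hyz
  have := abs_sub_abs_le_abs_sub (z i - Q.center i) (y i - Q.center i)
  rw [sub_sub_sub_cancel_right] at this
  have : (1 : ℝ) ≤ 2 ^ j := one_le_pow₀ one_le_two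
  rw [pow_succ] at hi
  nlinarith [Q.side_pos]

end Cube

lemma osc_le_of_volume_lt {f : Sp n → ℝ} {s : ℝ} {Q : Cube n} {c α : ℝ} (hα : 0 ≤ α)
    (h : volume {y ∈ Q.set | α < |f y - c|} < ENNReal.ofReal s * volume Q.set) :
    osc f s Q ≤ α :=
  (ciInf_le ⟨0, by rintro _ ⟨_, rfl⟩; exact Real.sInf_nonneg fun _ ha => ha.1⟩ c).trans
    (csInf_le ⟨0, fun _ ha => ha.1⟩ ⟨hα, h⟩)

lemma setLIntegral_le_maximal_mul_volume (f : Sp n → ℝ) {x : Sp n} {R : Cube n}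
    (hx : x ∈ R.set) : ∫⁻ z in R.set, ENNReal.ofReal |f z| ≤ maximal f x * volume R.set := by
  rw [← ENNReal.div_le_iff (by simp [R.volume_set, R.side_pos]) (by simp [R.volume_set])]
  exact le_iSup (fun P : {P : Cube n // x ∈ P.set} =>
    (∫⁻ z in P.1.set, ENNReal.ofReal |f z|) / volume P.1.set) ⟨R, hx⟩

lemma abs_integral_sub_integral_le_of_lintegral_le {α : Type*} [MeasurableSpace α]
    {μ : Measure α} {g₁ g₂ : α → ℝ} {B : ℝ} (hB : 0 ≤ B)
    (hmeas : AEStronglyMeasurable (g₁ - g₂) μ)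
    (h : ∫⁻ a, ENNReal.ofReal |g₁ a - g₂ a| ∂μ ≤ ENNReal.ofReal B) :
    |∫ a, g₁ a ∂μ - ∫ a, g₂ a ∂μ| ≤ B := by
  have h' : ∫⁻ a, ENNReal.ofReal ‖(g₁ - g₂) a‖ ∂μ ≤ ENNReal.ofReal B := by
    simpa only [Pi.sub_apply, Real.norm_eq_abs] using h
  have hint : Integrable (g₁ - g₂) μ :=
    ⟨hmeas, (hasFiniteIntegral_iff_norm _).2 (h'.trans_lt ENNReal.ofReal_lt_top)⟩
  by_cases h₂ : Integrable g₂ μ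
  · have h₁ : Integrable g₁ μ := by simpa using hint.add h₂
    rw [← integral_sub h₁ h₂]
    exact (norm_integral_le_lintegral_norm _).trans (ENNReal.toReal_le_of_le_ofReal hB h')
  · have h₁ : ¬Integrable g₁ μ := fun h₁ => h₂ (by simpa using h₁.sub hint)
    simp [integral_undef h₁, integral_undef h₂, hB]

lemma dyadic_rpow_identity {b side δ : ℝ} (hb : 0 ≤ b) (hside : 0 < side) (j : ℕ) :
    (b * side) ^ δ / (2 ^ j * side / 2) ^ ((n : ℝ) + δ) * (2 ^ (j + 2) * side) ^ n =
      b ^ δ * 8 ^ n * 2 ^ δ * ((2 ^ δ)⁻¹) ^ j := by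
  set u : ℝ := 2 ^ j * side / 2 with hu_def
  have hu : 0 < u := by positivity
  have h8 : 2 ^ (j + 2) * side = 8 * u := by rw [hu_def]; ring
  have hside_eq : side = u * 2 * (2 ^ j)⁻¹ := by rw [hu_def]; field_simp
  have hside_rpow : side ^ δ = u ^ δ * 2 ^ δ * ((2 ^ δ)⁻¹) ^ j := by
    rw [hside_eq, Real.mul_rpow (by positivity) (by positivity), Real.mul_rpow hu.le zero_le_two,
      Real.inv_rpow (by positivity), ← Real.rpow_pow_comm zero_le_two, inv_pow]
  rw [Real.rpow_add hu, Real.rpow_natCast, h8, mul_pow, Real.mul_rpow hb hside.le, hside_rpow]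
  field_simp

def HormanderCondition (k : Sp n → Sp n → ℝ) (C δ : ℝ) : Prop :=
  ∀ (Q : Cube n), ∀ x ∈ Q.set, ∀ x' ∈ Q.set, ∀ y ∉ (Q.dilate 2 (by norm_num)).set,
    |k x y - k x' y| ≤ C * ‖x - x'‖ ^ δ / ‖x - y‖ ^ ((n : ℝ) + δ)

/-- Summing the kernel estimate over the annuli `2ʲ⁺²Q \ 2ʲ⁺¹Q` gives a geometric series of
ratio `2⁻ᵟ`; this is its sum. -/
noncomputable def hormanderConst (n : ℕ) (C δ : ℝ) : ℝ :=
  C * √n ^ δ * 8 ^ n * 2 ^ δ / (1 - (2 ^ δ)⁻¹)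

lemma inv_two_rpow_lt_one {δ : ℝ} (hδ : 0 < δ) : (2 ^ δ : ℝ)⁻¹ < 1 :=
  inv_lt_one_of_one_lt₀ (Real.one_lt_rpow one_lt_two hδ)

lemma hormanderConst_nonneg {C δ : ℝ} (hC : 0 ≤ C) (hδ : 0 < δ) : 0 ≤ hormanderConst n C δ :=
  div_nonneg (by positivity) (sub_nonneg.2 (inv_two_rpow_lt_one hδ).le)

namespace HormanderCondition

variable {k : Sp n → Sp n → ℝ} {C δ : ℝ}

lemma abs_sub_le_of_notMem_dyadicDilate (hk : HormanderCondition k C δ) (hC : 0 ≤ C)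
    (hδ : 0 < δ) {Q : Cube n} {y y' z : Sp n} (hy : y ∈ Q.set) (hy' : y' ∈ Q.set) {j : ℕ}
    (hz : z ∉ (Q.dyadicDilate (j + 1)).set) :
    |k y z - k y' z| ≤ C * (√n * Q.side) ^ δ / (2 ^ j * Q.side / 2) ^ ((n : ℝ) + δ) := by
  have hz2 : z ∉ (Q.dilate 2 two_pos).set := fun h => hz <|
    Q.dilate_set_mono _ _ (le_self_pow₀ one_le_two (Nat.succ_ne_zero j)) h
  refine (hk Q y hy y' hy' z hz2).trans ?_
  have := Q.side_pos
  gcongr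
  · exact Cube.norm_sub_le_of_mem_set hy hy'
  · exact Cube.le_norm_sub_of_notMem_dyadicDilate hy hz

lemma lintegral_annulus_le (hk : HormanderCondition k C δ) (hC : 0 ≤ C) (hδ : 0 < δ)
    (f : Sp n → ℝ) {Q : Cube n} {x y y' : Sp n} (hx : x ∈ Q.set) (hy : y ∈ Q.set)
    (hy' : y' ∈ Q.set) {m : ℝ} (hm : 0 ≤ m) (hmax : maximal f x ≤ ENNReal.ofReal m) (j : ℕ) :
    ∫⁻ z in (Q.dyadicDilate (j + 2)).set \ (Q.dyadicDilate (j + 1)).set,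
        ENNReal.ofReal (|k y z - k y' z| * |f z|) ≤
      ENNReal.ofReal (C * √n ^ δ * 8 ^ n * 2 ^ δ * m * ((2 ^ δ)⁻¹) ^ j) := by
  set K : ℝ := C * (√n * Q.side) ^ δ / (2 ^ j * Q.side / 2) ^ ((n : ℝ) + δ)
  have hK : 0 ≤ K := by have := Q.side_pos; positivity
  have hxD : x ∈ (Q.dyadicDilate (j + 2)).set :=
    Q.set_subset_dilate _ (one_le_pow₀ one_le_two) hx
  calc ∫⁻ z in (Q.dyadicDilate (j + 2)).set \ (Q.dyadicDilate (j + 1)).set,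
        ENNReal.ofReal (|k y z - k y' z| * |f z|)
      ≤ ∫⁻ z in (Q.dyadicDilate (j + 2)).set \ (Q.dyadicDilate (j + 1)).set,
        ENNReal.ofReal K * ENNReal.ofReal |f z| := by
        refine setLIntegral_mono' ((Cube.measurableSet_set _).diff (Cube.measurableSet_set _))
          fun z hz => ?_
        rw [← ENNReal.ofReal_mul hK]
        exact ENNReal.ofReal_le_ofReal (mul_le_mul_of_nonneg_right
          (hk.abs_sub_le_of_notMem_dyadicDilate hC hδ hy hy' hz.2) (abs_nonneg _))
    _ ≤ ENNReal.ofReal K * ∫⁻ z in (Q.dyadicDilate (j + 2)).set, ENNReal.ofReal |f z| := by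
        rw [lintegral_const_mul' _ _ ENNReal.ofReal_ne_top]
        exact mul_le_mul_right (lintegral_mono_set Set.sdiff_subset) _
    _ ≤ ENNReal.ofReal K * (ENNReal.ofReal m * volume (Q.dyadicDilate (j + 2)).set) :=
        mul_le_mul_right ((setLIntegral_le_maximal_mul_volume f hxD).trans
          (mul_le_mul_left hmax _)) _
    _ = ENNReal.ofReal (C * √n ^ δ * 8 ^ n * 2 ^ δ * m * ((2 ^ δ)⁻¹) ^ j) := by
        rw [Cube.volume_set, ← ENNReal.ofReal_mul hm, ← ENNReal.ofReal_mul hK]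
        congr 1
        have := dyadic_rpow_identity (n := n) (Real.sqrt_nonneg n) Q.side_pos (δ := δ) j
        simp only [K, Cube.dyadicDilate, Cube.dilate] at this ⊢
        linear_combination C * m * this

lemma lintegral_compl_dilate_two_le (hk : HormanderCondition k C δ) (hC : 0 ≤ C) (hδ : 0 < δ)
    (f : Sp n → ℝ) {Q : Cube n} {x y y' : Sp n} (hx : x ∈ Q.set) (hy : y ∈ Q.set)
    (hy' : y' ∈ Q.set) {m : ℝ} (hm : 0 ≤ m) (hmax : maximal f x ≤ ENNReal.ofReal m) :
    ∫⁻ z in (Q.dilate 2 two_pos).setᶜ, ENNReal.ofReal (|k y z - k y' z| * |f z|) ≤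
      ENNReal.ofReal (hormanderConst n C δ * m) := by
  have hgeom := (hasSum_geometric_of_lt_one (by positivity) (inv_two_rpow_lt_one hδ)).mul_left
    (C * √n ^ δ * 8 ^ n * 2 ^ δ * m)
  calc ∫⁻ z in (Q.dilate 2 two_pos).setᶜ, ENNReal.ofReal (|k y z - k y' z| * |f z|)
      ≤ ∫⁻ z in ⋃ j, (Q.dyadicDilate (j + 2)).set \ (Q.dyadicDilate (j + 1)).set,
          ENNReal.ofReal (|k y z - k y' z| * |f z|) :=
        lintegral_mono_set Q.compl_dilate_two_subset
    _ ≤ ∑' j, ∫⁻ z in (Q.dyadicDilate (j + 2)).set \ (Q.dyadicDilate (j + 1)).set,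
          ENNReal.ofReal (|k y z - k y' z| * |f z|) := lintegral_iUnion_le _ _
    _ ≤ ∑' j : ℕ, ENNReal.ofReal (C * √n ^ δ * 8 ^ n * 2 ^ δ * m * ((2 ^ δ)⁻¹) ^ j) :=
        ENNReal.tsum_le_tsum (hk.lintegral_annulus_le hC hδ f hx hy hy' hm hmax)
    _ = ENNReal.ofReal (hormanderConst n C δ * m) := by
        rw [← ENNReal.ofReal_tsum_of_nonneg (fun j => by positivity) hgeom.summable,
          hgeom.tsum_eq, hormanderConst]
        congr 1
        ring

lemma abs_apply_indicator_compl_sub_le (hk : HormanderCondition k C δ) (hkm : Measurable (Function.uncurry k))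
    (hC : 0 ≤ C) (hδ : 0 < δ) {T : (Sp n → ℝ) → (Sp n → ℝ)}
    (hT : ∀ g : Sp n → ℝ, Integrable g → ∀ x ∉ tsupport g, T g x = ∫ y, k x y * g y)
    {f : Sp n → ℝ} (hf : Integrable f) {Q : Cube n} {x y y' : Sp n} (hx : x ∈ Q.set)
    (hy : y ∈ Q.set) (hy' : y' ∈ Q.set) {m : ℝ} (hm : 0 ≤ m)
    (hmax : maximal f x ≤ ENNReal.ofReal m) :
    |T ((Q.dilate 2 two_pos).setᶜ.indicator f) y - T ((Q.dilate 2 two_pos).setᶜ.indicator f) y'|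
      ≤ hormanderConst n C δ * m := by
  set S := (Q.dilate 2 two_pos).set
  have hS : MeasurableSet S := Cube.measurableSet_set _
  have hT_eq : ∀ w ∈ Q.set, T (Sᶜ.indicator f) w = ∫ z, k w z * Sᶜ.indicator f z := by
    refine fun w hw => hT _ (hf.indicator hS.compl) w fun hmem => ?_
    have hsupp : tsupport (Sᶜ.indicator f) ⊆ (interior S)ᶜ :=
      (closure_mono Set.support_indicator_subset).trans closure_compl.subset
    exact hsupp hmem (Q.set_subset_interior_dilate two_pos one_lt_two hw)
  rw [hT_eq y hy, hT_eq y' hy']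
  refine abs_integral_sub_integral_le_of_lintegral_le (mul_nonneg (hormanderConst_nonneg hC hδ) hm)
    ?_ ?_
  · have hk_meas : ∀ w, Measurable (k w) := fun w => hkm.comp measurable_prodMk_left
    exact ((hk_meas y).aestronglyMeasurable.mul (hf.1.indicator hS.compl)).sub
      ((hk_meas y').aestronglyMeasurable.mul (hf.1.indicator hS.compl))
  · refine le_of_eq_of_le ?_ (hk.lintegral_compl_dilate_two_le hC hδ f hx hy hy' hm hmax)
    rw [← lintegral_indicator hS.compl]
    congr 1 with z
    by_cases hz : z ∈ S <;> simp [hz, ← sub_mul, abs_mul]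

end HormanderCondition

lemma volume_lt_of_weakType {T : (Sp n → ℝ) → (Sp n → ℝ)} {CT : ℝ}
    (hT : ∀ g : Sp n → ℝ, Integrable g → ∀ lam : ℝ, 0 < lam →
      volume {x | ENNReal.ofReal lam < ENNReal.ofReal |T g x|}
        ≤ ENNReal.ofReal CT * (∫⁻ x, ENNReal.ofReal |g x|) / ENNReal.ofReal lam)
    {g : Sp n → ℝ} (hg : Integrable g) {s : ℝ} (hs : 0 < s) {Q : Cube n} {m : ℝ} (hm : 0 < m)
    (hgQ : ∫⁻ z, ENNReal.ofReal |g z| ≤ ENNReal.ofReal m * volume (Q.dilate 2 two_pos).set) :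
    volume {y ∈ Q.set | 2 ^ (n + 1) * max CT 1 * m / s < |T g y|}
      < ENNReal.ofReal s * volume Q.set := by
  set lam : ℝ := 2 ^ (n + 1) * max CT 1 * m / s
  have hCT : 0 < max CT 1 := lt_max_of_lt_right one_pos
  have hlam : 0 < lam := by positivity
  have hQ := Q.side_pos
  calc volume {y ∈ Q.set | lam < |T g y|}
      ≤ volume {z | ENNReal.ofReal lam < ENNReal.ofReal |T g z|} :=
        measure_mono fun z hz => (ENNReal.ofReal_lt_ofReal_iff (hlam.trans hz.2)).2 hz.2
    _ ≤ ENNReal.ofReal CT * (∫⁻ z, ENNReal.ofReal |g z|) / ENNReal.ofReal lam := hT g hg lam hlam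
    _ ≤ ENNReal.ofReal (max CT 1) * (ENNReal.ofReal m * ENNReal.ofReal ((2 * Q.side) ^ n))
          / ENNReal.ofReal lam := by
        rw [Cube.volume_set] at hgQ
        gcongr
        exacts [le_max_left _ _, hgQ]
    _ = ENNReal.ofReal (s * Q.side ^ n / 2) := by
        rw [← ENNReal.ofReal_mul hm.le, ← ENNReal.ofReal_mul hCT.le,
          ← ENNReal.ofReal_div_of_pos hlam]
        congr 1
        simp only [lam]
        field_simp
        ring
    _ < ENNReal.ofReal s * volume Q.set := by
        rw [Q.volume_set, ← ENNReal.ofReal_mul hs.le, ENNReal.ofReal_lt_ofReal_iff (by positivity)]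
        linarith [mul_pos hs (pow_pos hQ n)]

theorem osc_le_of_maximal_le {k : Sp n → Sp n → ℝ} {C δ : ℝ} (hk : HormanderCondition k C δ)
    (hkm : Measurable (Function.uncurry k)) (hC : 0 ≤ C) (hδ : 0 < δ)
    {T : (Sp n → ℝ) → (Sp n → ℝ)}
    (hadd : ∀ g₁ g₂ : Sp n → ℝ, Integrable g₁ → Integrable g₂ → T (g₁ + g₂) = T g₁ + T g₂)
    {CT : ℝ}
    (hT1 : ∀ g : Sp n → ℝ, Integrable g → ∀ lam : ℝ, 0 < lam →
      volume {x | ENNReal.ofReal lam < ENNReal.ofReal |T g x|}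
        ≤ ENNReal.ofReal CT * (∫⁻ x, ENNReal.ofReal |g x|) / ENNReal.ofReal lam)
    (hT2 : ∀ g : Sp n → ℝ, Integrable g → ∀ x ∉ tsupport g, T g x = ∫ y, k x y * g y)
    {s : ℝ} (hs : 0 < s) {f : Sp n → ℝ} (hf : Integrable f) {Q : Cube n} {x : Sp n}
    (hx : x ∈ Q.set) {m : ℝ} (hm : 0 < m) (hmax : maximal f x ≤ ENNReal.ofReal m) :
    osc (T f) s Q ≤ (2 ^ (n + 1) * max CT 1 / s + hormanderConst n C δ) * m := by
  set S := (Q.dilate 2 two_pos).set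
  have hS : MeasurableSet S := Cube.measurableSet_set _
  have hsplit : T f = T (S.indicator f) + T (Sᶜ.indicator f) := by
    rw [← hadd _ _ (hf.indicator hS) (hf.indicator hS.compl), Set.indicator_self_add_compl]
  have hnear := volume_lt_of_weakType hT1 (hf.indicator hS) hs hm <| by
    calc ∫⁻ z, ENNReal.ofReal |S.indicator f z| = ∫⁻ z in S, ENNReal.ofReal |f z| := by
          rw [← lintegral_indicator hS]
          congr 1 with z
          by_cases hz : z ∈ S <;> simp [hz]
      _ ≤ ENNReal.ofReal m * volume S :=
          (setLIntegral_le_maximal_mul_volume f (Q.set_subset_dilate _ one_le_two hx)).trans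
            (mul_le_mul_left hmax _)
  have hfar : ∀ y ∈ Q.set, |T (Sᶜ.indicator f) y - T (Sᶜ.indicator f) Q.corner|
      ≤ hormanderConst n C δ * m := fun y hy =>
    hk.abs_apply_indicator_compl_sub_le hkm hC hδ hT2 hf hx hy Q.corner_mem_set hm.le hmax
  set lam := 2 ^ (n + 1) * max CT 1 * m / s
  have hsub : {y ∈ Q.set | lam + hormanderConst n C δ * m < |T f y - T (Sᶜ.indicator f) Q.corner|}
      ⊆ {y ∈ Q.set | lam < |T (S.indicator f) y|} := by
    rintro y ⟨hy, hlt⟩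
    refine ⟨hy, ?_⟩
    rw [hsplit, Pi.add_apply, add_sub_assoc] at hlt
    linarith [abs_add_le (T (S.indicator f) y) (T (Sᶜ.indicator f) y - T (Sᶜ.indicator f) Q.corner),
      hfar y hy]
  have hA := hormanderConst_nonneg (n := n) hC hδ
  calc osc (T f) s Q ≤ lam + hormanderConst n C δ * m :=
        osc_le_of_volume_lt (by positivity) ((measure_mono hsub).trans_lt hnear)
    _ = (2 ^ (n + 1) * max CT 1 / s + hormanderConst n C δ) * m := by ring

/-- Under the hypotheses of Statement 4, for every `0 < s ≤ 1/2` there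
is `c > 0` such that for every integrable `f` and every `x ∈ ℝⁿ`:
`M♯_{0,s}(Tf)(x) ≤ c · Mf(x)`. -/
theorem statement6 {n : ℕ} (k : Sp n → Sp n → ℝ)
    (hkm : Measurable (Function.uncurry k)) (C δ : ℝ) (hC : 0 < C) (hδ : 0 < δ)
    (hker : ∀ (Q : Cube n), ∀ x ∈ Q.set, ∀ x' ∈ Q.set,
      ∀ y ∉ (Q.dilate 2 (by norm_num)).set,
        |k x y - k x' y| ≤ C * ‖x - x'‖ ^ δ / ‖x - y‖ ^ ((n : ℝ) + δ))
    (T : (Sp n → ℝ) → (Sp n → ℝ))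
    (hadd : ∀ g₁ g₂ : Sp n → ℝ, Integrable g₁ → Integrable g₂ → T (g₁ + g₂) = T g₁ + T g₂)
    (CT : ℝ)
    (hT1 : ∀ g : Sp n → ℝ, Integrable g → ∀ lam : ℝ, 0 < lam →
      volume {x | ENNReal.ofReal lam < ENNReal.ofReal |T g x|}
        ≤ ENNReal.ofReal CT * (∫⁻ x, ENNReal.ofReal |g x|) / ENNReal.ofReal lam)
    (hT2 : ∀ g : Sp n → ℝ, Integrable g → ∀ x ∉ tsupport g, T g x = ∫ y, k x y * g y)
    (s : ℝ) (hs0 : 0 < s) :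
    ∃ c : ℝ, 0 < c ∧
      ∀ f : Sp n → ℝ, Integrable f → ∀ x : Sp n,
        sharp (T f) s x ≤ ENNReal.ofReal c * maximal f x := by
  set c := 2 ^ (n + 1) * max CT 1 / s + hormanderConst n C δ
  have hc : 0 < c := by have := hormanderConst_nonneg (n := n) hC.le hδ; positivity
  refine ⟨c, hc, fun f hf x => iSup_le fun ⟨Q, hxQ⟩ => ?_⟩
  rcases eq_top_or_lt_top (maximal f x) with hM | hM
  · rw [hM, ENNReal.mul_top (ENNReal.ofReal_pos.2 hc).ne']
    exact le_top
  rw [← ENNReal.ofReal_toReal hM.ne, ← ENNReal.ofReal_mul hc.le]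
  -- `osc_le_of_maximal_le` needs a strictly positive bound `m`, since the weak-type estimate is
  -- only available at positive heights.
  refine ENNReal.ofReal_le_ofReal (le_of_forall_pos_le_add fun ε hε => ?_)
  have hmax : maximal f x ≤ ENNReal.ofReal ((maximal f x).toReal + ε / c) :=
    (ENNReal.ofReal_toReal hM.ne).symm.le.trans
      (ENNReal.ofReal_le_ofReal (le_add_of_nonneg_right (by positivity)))
  calc osc (T f) s Q ≤ c * ((maximal f x).toReal + ε / c) :=
        osc_le_of_maximal_le hker hkm hC.le hδ hadd hT1 hT2 hs0 hf hxQ (by positivity) hmax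
    _ = c * (maximal f x).toReal + ε := by field_simp

end LocalMedian
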